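/- In the special case Δ(x) = x², for any finite set W of real-valued trees of depth n and any C > 0: E_ε[ max_{w ∈ W} Σ_{t=1}^n (2C ε_t w_t(ε) - w_t(ε)²) ] ≤ 2C² log|W|. -/

import Mathlib

/-!
With `x = w / C` and `λ = 1 / (2 C²)`, the exponent `λ Σ_t (2 C ε_t w_t - w_t²)` becomes
`Σ_t (ε_t x_t - x_t² / 2)`. For a predictable `x` its exponential has mean at most `1`: conditioning
on the first sign, `cosh a ≤ exp (a² / 2)` peels off one level of the tree. The maximum over `W` is
then handled by Jensen's inequality for `exp` and a union bound, giving `λ E max ≤ log |W|`.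
-/

open Real Finset
open scoped BigOperators

def IsPredictable {n : ℕ} {α : Type*} (x : (Fin n → Bool) → Fin n → α) : Prop :=
  ∀ t ε ε', (∀ s < t, ε s = ε' s) → x ε t = x ε' t

namespace IsPredictable

variable {n : ℕ} {α : Type*}

theorem apply_zero_eq {x : (Fin (n + 1) → Bool) → Fin (n + 1) → α} (hx : IsPredictable x)
    (ε ε' : Fin (n + 1) → Bool) : x ε 0 = x ε' 0 :=
  hx 0 ε ε' fun s hs => absurd hs (Fin.not_lt_zero s)

theorem cons {x : (Fin (n + 1) → Bool) → Fin (n + 1) → α} (hx : IsPredictable x) (b : Bool) :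
    IsPredictable fun ε s => x (Fin.cons b ε) s.succ := by
  intro t ε ε' h
  refine hx t.succ _ _ fun s => Fin.cases (fun _ => rfl) (fun s hs => ?_) s
  simpa using h s (Fin.succ_lt_succ_iff.mp hs)

theorem map {β : Type*} {x : (Fin n → Bool) → Fin n → α} (hx : IsPredictable x) (g : α → β) :
    IsPredictable fun ε t => g (x ε t) :=
  fun t ε ε' h => congrArg g (hx t ε ε' h)

end IsPredictable

theorem sum_bool_exp_sign_mul_sub_sq_half_le (a : ℝ) :
    ∑ b : Bool, exp ((if b then 1 else -1) * a - a ^ 2 / 2) ≤ 2 := by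
  have hsum : exp (a - a ^ 2 / 2) + exp (-a - a ^ 2 / 2) = 2 * (cosh a * exp (-(a ^ 2 / 2))) := by
    rw [cosh_eq]; simp only [sub_eq_add_neg, exp_add]; ring
  have hcosh : cosh a * exp (-(a ^ 2 / 2)) ≤ 1 := by
    rw [← le_div_iff₀ (exp_pos _), exp_neg, div_inv_eq_mul, one_mul]
    exact cosh_le_exp_half_sq a
  simp only [Fintype.sum_bool, if_true, one_mul, Bool.false_eq_true, if_false, neg_one_mul, hsum]
  linarith

theorem sum_exp_sum_sign_mul_sub_sq_half_le {n : ℕ} (x : (Fin n → Bool) → Fin n → ℝ)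
    (hx : IsPredictable x) :
    ∑ ε : Fin n → Bool, exp (∑ t, ((if ε t then 1 else -1) * x ε t - x ε t ^ 2 / 2)) ≤ 2 ^ n := by
  induction n with
  | zero => simp
  | succ n ih =>
    set a := x (fun _ => true) 0
    rw [← (Fin.consEquiv fun _ => Bool).sum_comp, Fintype.sum_prod_type]
    simp only [Fin.consEquiv_apply, Fin.sum_univ_succ, Fin.cons_zero, Fin.cons_succ, exp_add,
      ← mul_sum, hx.apply_zero_eq _ (fun _ => true)]
    calc ∑ b : Bool, exp ((if b then 1 else -1) * a - a ^ 2 / 2) * ∑ ε : Fin n → Bool,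
          exp (∑ s, ((if ε s then 1 else -1) * x (Fin.cons b ε) s.succ
            - x (Fin.cons b ε) s.succ ^ 2 / 2))
        ≤ ∑ b : Bool, exp ((if b then 1 else -1) * a - a ^ 2 / 2) * 2 ^ n :=
          sum_le_sum fun b _ => mul_le_mul_of_nonneg_left (ih _ (hx.cons b)) (exp_nonneg _)
      _ ≤ 2 * 2 ^ n := by
          rw [← sum_mul]
          exact mul_le_mul_of_nonneg_right (sum_bool_exp_sign_mul_sub_sq_half_le a) (by positivity)
      _ = 2 ^ (n + 1) := by ring

theorem expect_exp_sum_sign_mul_sub_sq_half_le_one {n : ℕ} (x : (Fin n → Bool) → Fin n → ℝ)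
    (hx : IsPredictable x) :
    𝔼 ε : Fin n → Bool, exp (∑ t, ((if ε t then 1 else -1) * x ε t - x ε t ^ 2 / 2)) ≤ 1 := by
  rw [Fintype.expect_eq_sum_div_card, div_le_one (by positivity)]
  simpa using sum_exp_sum_sign_mul_sub_sq_half_le x hx

theorem exp_expect_le_expect_exp {Ω : Type*} [Fintype Ω] [Nonempty Ω] (f : Ω → ℝ) :
    exp (𝔼 ω, f ω) ≤ 𝔼 ω, exp (f ω) := by
  have hcard : (0 : ℝ) < Fintype.card Ω := by exact_mod_cast Fintype.card_pos
  simpa [Fintype.expect_eq_sum_div_card, div_eq_inv_mul, mul_sum] using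
    convexOn_exp.map_sum_le (t := univ) (w := fun _ => (Fintype.card Ω : ℝ)⁻¹) (p := f)
      (fun _ _ => by positivity) (by simp [card_univ, hcard.ne']) (fun _ _ => Set.mem_univ _)

theorem expect_sup'_le_log_card_div {Ω ι : Type*} [Fintype Ω] [Nonempty Ω] {W : Finset ι}
    (hW : W.Nonempty) (F : ι → Ω → ℝ) {l : ℝ} (hl : 0 < l)
    (hF : ∀ i ∈ W, 𝔼 ω, exp (l * F i ω) ≤ 1) :
    𝔼 ω, W.sup' hW (F · ω) ≤ log W.card / l := by
  have hexp_sup : ∀ ω, exp (l * W.sup' hW (F · ω)) ≤ ∑ i ∈ W, exp (l * F i ω) := fun ω => by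
    obtain ⟨i, hi, hsup⟩ := W.exists_mem_eq_sup' hW (F · ω)
    rw [hsup]
    exact single_le_sum (f := fun i => exp (l * F i ω)) (fun i _ => (exp_pos _).le) hi
  have hunion : exp (l * 𝔼 ω, W.sup' hW (F · ω)) ≤ W.card :=
    calc exp (l * 𝔼 ω, W.sup' hW (F · ω))
        = exp (𝔼 ω, l * W.sup' hW (F · ω)) := by rw [mul_expect]
      _ ≤ 𝔼 ω, exp (l * W.sup' hW (F · ω)) := exp_expect_le_expect_exp _
      _ ≤ 𝔼 ω, ∑ i ∈ W, exp (l * F i ω) := expect_le_expect fun ω _ => hexp_sup ω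
      _ = ∑ i ∈ W, 𝔼 ω, exp (l * F i ω) := expect_sum_comm _ _ _
      _ ≤ ∑ _i ∈ W, 1 := sum_le_sum hF
      _ = W.card := by simp
  rw [le_div_iff₀ hl, mul_comm, le_log_iff_exp_le (by exact_mod_cast hW.card_pos)]
  exact hunion

/-- Offset maximal inequality, square case Δ(x) = x²:
E max_{w∈W} Σ_t (2Cε_t w_t(ε) − w_t(ε)²) ≤ 2C² log|W|. -/
theorem offset_maximal_inequality_square {n : ℕ}
    (W : Finset ((Fin n → Bool) → Fin n → ℝ)) (hW : W.Nonempty)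
    (hpred : ∀ w ∈ W, ∀ t : Fin n, ∀ ε ε' : Fin n → Bool,
      (∀ s : Fin n, s < t → ε s = ε' s) → w ε t = w ε' t)
    (C : ℝ) (hC : 0 < C) :
    (∑ ε : Fin n → Bool,
        W.sup' hW fun w =>
          ∑ t, (2 * C * (if ε t then (1 : ℝ) else -1) * w ε t - (w ε t) ^ 2)) / 2 ^ n
      ≤ 2 * C ^ 2 * Real.log W.card := by
  have hmgf : ∀ w ∈ W, 𝔼 ε, exp (1 / (2 * C ^ 2) *
      ∑ t, (2 * C * (if ε t then (1 : ℝ) else -1) * w ε t - (w ε t) ^ 2)) ≤ 1 := by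
    intro w hw
    have hexponent : ∀ ε : Fin n → Bool, 1 / (2 * C ^ 2) *
        ∑ t, (2 * C * (if ε t then (1 : ℝ) else -1) * w ε t - (w ε t) ^ 2) =
        ∑ t, ((if ε t then 1 else -1) * (w ε t / C) - (w ε t / C) ^ 2 / 2) := fun ε => by
      rw [mul_sum]; congr! 1; field_simp
    simp only [hexponent]
    exact expect_exp_sum_sign_mul_sub_sq_half_le_one _ (IsPredictable.map (hpred w hw) (· / C))
  calc _ = 𝔼 ε, W.sup' hW fun w =>
          ∑ t, (2 * C * (if ε t then (1 : ℝ) else -1) * w ε t - (w ε t) ^ 2) := by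
        simp [Fintype.expect_eq_sum_div_card]
    _ ≤ log W.card / (1 / (2 * C ^ 2)) :=
        expect_sup'_le_log_card_div hW _ (by positivity) hmgf
    _ = 2 * C ^ 2 * log W.card := by rw [div_div_eq_mul_div, div_one, mul_comm]
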